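/- Let N be a positive integer, a ∈ ℝⁿ, and let φ be a smooth function supported in the unit ball with φ_l(x) := 2^{ln} φ(2^l x). Suppose f : ℝⁿ → ℂ is integrable with ∫ x^α f(x) dx = 0 for all multi-indices |α| ≤ N, and that |y - a|^{N+ε} |f(y)| is integrable. Then for any 0 ≤ ε ≤ 1 there exists C_ε > 0 such that ‖φ_l * f‖_{L^∞} ≤ C_ε 2^{l(N+n+ε)} ∫ |y - a|^{N+ε} |f(y)| dy. -/

import Mathlib

open MeasureTheory Real Complex
open scoped ENNReal FourierTransform RealInnerProductSpace
noncomputable section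

abbrev En (n : ℕ) := EuclideanSpace ℝ (Fin n)

/-- The Japanese bracket `⟨y⟩ = (1 + 4π²|y|²)^{1/2}`. -/
def jap {V : Type*} [NormedAddCommGroup V] (y : V) : ℝ :=
  Real.sqrt (1 + 4 * π ^ 2 * ‖y‖ ^ 2)

/-- The axis-parallel cube with lower-left corner `c` and side length `l`. -/
def cube {n : ℕ} (c : En n) (l : ℝ) : Set (En n) :=
  {y | ∀ i, c i ≤ y i ∧ y i ≤ c i + l}

/-- The Hardy–Littlewood maximal function (supremum over cubes containing `x`). -/
def hlMax {n : ℕ} (f : En n → ℝ) (x : En n) : ℝ :=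
  ⨆ (c : En n) (l : {l : ℝ // 0 < l}) (_ : x ∈ cube c l.1),
    (1 / l.1 ^ n) * ∫ y in cube c l.1, |f y|

/-- The dyadic cube of generation `j` indexed by `m ∈ ℤⁿ`. -/
def dyQ (n : ℕ) (j : ℤ) (m : Fin n → ℤ) : Set (En n) :=
  {y | ∀ i, (2:ℝ) ^ (-j) * m i ≤ y i ∧ y i < (2:ℝ) ^ (-j) * (m i + 1)}

/-- The lower-left corner of the dyadic cube of generation `j` indexed by `m`. -/
def dyCorner (n : ℕ) (j : ℤ) (m : Fin n → ℤ) : En n :=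
  WithLp.toLp 2 (fun i => (2:ℝ) ^ (-j) * m i)

lemma coordEn {n : ℕ} (z : En n) (i : Fin n) : |z i| ≤ ‖z‖ := by
  rw [EuclideanSpace.norm_eq]
  have h1 : |z i| = Real.sqrt (‖z i‖ ^ 2) := by
    simp [Real.norm_eq_abs, Real.sqrt_sq_eq_abs]
  rw [h1]
  apply Real.sqrt_le_sqrt
  exact Finset.single_le_sum (f := fun j => ‖z j‖ ^ 2) (fun j _ => sq_nonneg _)
    (Finset.mem_univ i)

lemma integ_mul {n N : ℕ} {a : En n} {f : En n → ℂ} {ε : ℝ} (hε0 : 0 ≤ ε)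
    (hf : Integrable f)
    (hf2 : Integrable (fun y : En n => ‖y - a‖ ^ ((N : ℝ) + ε) * ‖f y‖))
    {h : En n → ℂ} (hc : Continuous h) {C : ℝ}
    (hC : ∀ y, ‖h y‖ ≤ C * (1 + ‖y - a‖) ^ N) :
    Integrable (fun y => h y * f y) := by
  have hC0 : 0 ≤ C := by
    have := hC a
    simp only [sub_self, norm_zero, add_zero, one_pow, mul_one] at this
    exact le_trans (norm_nonneg _) this
  apply Integrable.mono' (g := fun y => (C * 2 ^ N) * (‖f y‖ + ‖y - a‖ ^ ((N : ℝ) + ε) * ‖f y‖))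
  · exact ((hf.norm.add hf2).const_mul _)
  · exact hc.aestronglyMeasurable.mul hf.1
  · refine Filter.Eventually.of_forall fun y => ?_
    have key : (1 + ‖y - a‖) ^ N ≤ 2 ^ N * (1 + ‖y - a‖ ^ ((N : ℝ) + ε)) := by
      set u := ‖y - a‖ with hu
      have hu0 : 0 ≤ u := norm_nonneg _
      have hbase : 1 + u ≤ 2 * max 1 u := by
        rcases le_total u 1 with hle | hle
        · simp [max_eq_left hle]; linarith
        · simp [max_eq_right hle]; linarith
      have h1 : (1 + u) ^ N ≤ (2 * max 1 u) ^ N :=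
        pow_le_pow_left₀ (by positivity) hbase N
      rw [mul_pow] at h1
      refine h1.trans ?_
      gcongr 2 ^ N * ?_
      rcases le_total u 1 with hle | hle
      · rw [max_eq_left hle, one_pow]
        have : (0:ℝ) ≤ u ^ ((N:ℝ) + ε) := Real.rpow_nonneg hu0 _
        linarith
      · rw [max_eq_right hle]
        have h2 : u ^ N = u ^ ((N : ℝ)) := by rw [Real.rpow_natCast]
        rw [h2]
        have h3 : u ^ ((N:ℝ)) ≤ u ^ ((N:ℝ) + ε) :=
          Real.rpow_le_rpow_of_exponent_le hle (by linarith)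
        linarith
    calc ‖h y * f y‖ = ‖h y‖ * ‖f y‖ := norm_mul _ _
      _ ≤ (C * (1 + ‖y - a‖) ^ N) * ‖f y‖ := by
          gcongr; exact hC y
      _ ≤ (C * (2 ^ N * (1 + ‖y - a‖ ^ ((N : ℝ) + ε)))) * ‖f y‖ := by
          gcongr
      _ = (C * 2 ^ N) * (‖f y‖ + ‖y - a‖ ^ ((N : ℝ) + ε) * ‖f y‖) := by ring
lemma moment_shift {n N : ℕ} {a : En n} {f : En n → ℂ} {ε : ℝ} (hε0 : 0 ≤ ε)
    (hf : Integrable f)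
    (hf2 : Integrable (fun y : En n => ‖y - a‖ ^ ((N : ℝ) + ε) * ‖f y‖))
    (hmom : ∀ α : Fin n → ℕ, (∑ i, α i) ≤ N →
        ∫ x : En n, (∏ i, (x i : ℂ) ^ α i) * f x = 0)
    {k : ℕ} (hk : k ≤ N) (d : Fin k → Fin n) :
    ∫ y : En n, (∏ j, ((y (d j) : ℂ) - (a (d j) : ℂ))) * f y = 0 := by
  classical
  -- integrability of plain monomials
  have hmono : ∀ t : Finset (Fin k),
      Integrable (fun y : En n => (∏ j ∈ t, (y (d j) : ℂ)) * f y) := by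
    intro t
    refine integ_mul hε0 hf hf2 ?_ (C := (1 + ‖a‖) ^ N) ?_
    · exact continuous_finset_prod _ fun j _ =>
        Complex.continuous_ofReal.comp ((continuous_apply (d j)).comp
          (PiLp.continuous_ofLp 2 fun _ : Fin n => ℝ))
    · intro y
      have h1 : ‖∏ j ∈ t, ((y (d j) : ℂ))‖ = ∏ j ∈ t, |y (d j)| := by
        rw [norm_prod]; exact Finset.prod_congr rfl fun j _ => Complex.norm_real _
      rw [h1]
      have h2 : ∀ j ∈ t, |y (d j)| ≤ (1 + ‖a‖) * (1 + ‖y - a‖) := by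
        intro j _
        have := coordEn y (d j)
        have h3 : ‖y‖ ≤ ‖y - a‖ + ‖a‖ := by simpa using norm_add_le (y - a) a
        nlinarith [norm_nonneg a, norm_nonneg (y - a), abs_nonneg (y (d j))]
      calc ∏ j ∈ t, |y (d j)| ≤ ∏ _j ∈ t, (1 + ‖a‖) * (1 + ‖y - a‖) :=
            Finset.prod_le_prod (fun j _ => abs_nonneg _) h2
        _ = ((1 + ‖a‖) * (1 + ‖y - a‖)) ^ t.card := Finset.prod_const _
        _ ≤ ((1 + ‖a‖) * (1 + ‖y - a‖)) ^ N := by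
            apply pow_le_pow_right₀
            · nlinarith [norm_nonneg a, norm_nonneg (y - a)]
            · exact le_trans (Finset.card_le_card (Finset.subset_univ t))
                (by simpa using hk)
        _ = (1 + ‖a‖) ^ N * (1 + ‖y - a‖) ^ N := mul_pow _ _ _
  -- each plain monomial integrates against f to zero
  have hzero : ∀ t : Finset (Fin k),
      ∫ y : En n, (∏ j ∈ t, (y (d j) : ℂ)) * f y = 0 := by
    intro t
    set α : Fin n → ℕ := fun i => ∑ j ∈ t, (if d j = i then 1 else 0) with hα
    have hsum : (∑ i, α i) ≤ N := by
      have : (∑ i, α i) = ∑ j ∈ t, (1:ℕ) := by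
        rw [hα, Finset.sum_comm]
        exact Finset.sum_congr rfl fun j _ => by simp
      rw [this, Finset.sum_const, smul_eq_mul, mul_one]
      exact le_trans (Finset.card_le_card (Finset.subset_univ t)) (by simpa using hk)
    have hrepr : ∀ y : En n, (∏ j ∈ t, (y (d j) : ℂ)) = ∏ i, (y i : ℂ) ^ α i := by
      intro y
      rw [hα]
      have : ∀ i : Fin n, (y i : ℂ) ^ (∑ j ∈ t, if d j = i then 1 else 0) =
          ∏ j ∈ t, (y i : ℂ) ^ (if d j = i then 1 else 0) := by
        intro i; rw [Finset.prod_pow_eq_pow_sum]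
      simp_rw [this]
      rw [Finset.prod_comm]
      refine Finset.prod_congr rfl fun j _ => ?_
      simp_rw [pow_ite, pow_one, pow_zero]
      rw [Finset.prod_ite_eq]
      simp
    simp_rw [hrepr]
    exact hmom α hsum
  -- expand the product of differences
  have hexp : ∀ y : En n, (∏ j, ((y (d j) : ℂ) - (a (d j) : ℂ))) * f y =
      ∑ t ∈ (Finset.univ : Finset (Fin k)).powerset,
        (∏ j ∈ Finset.univ \ t, -(a (d j) : ℂ)) * ((∏ j ∈ t, (y (d j) : ℂ)) * f y) := by
    intro y
    have : (∏ j, ((y (d j) : ℂ) - (a (d j) : ℂ))) =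
        ∑ t ∈ (Finset.univ : Finset (Fin k)).powerset,
          (∏ j ∈ t, (y (d j) : ℂ)) * ∏ j ∈ Finset.univ \ t, -(a (d j) : ℂ) := by
      simp_rw [sub_eq_add_neg]
      exact Finset.prod_add _ _ _
    rw [this, Finset.sum_mul]
    exact Finset.sum_congr rfl fun t _ => by ring
  simp_rw [hexp]
  rw [integral_finset_sum]
  · exact Finset.sum_eq_zero fun t _ => by
      rw [integral_const_mul, hzero t, mul_zero]
  · exact fun t _ => (hmono t).const_mul _
lemma iter_translate {n : ℕ} {φ : En n → ℝ} (hφ : ContDiff ℝ (⊤ : ℕ∞) φ) (c : En n) (k : ℕ) :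
    iteratedFDeriv ℝ k (fun z => φ (c + z)) = fun w => iteratedFDeriv ℝ k φ (c + w) := by
  induction k with
  | zero => funext w; ext m; simp
  | succ k IH =>
    funext w; ext m
    rw [iteratedFDeriv_succ_apply_left, iteratedFDeriv_succ_apply_left, IH]
    have hd : DifferentiableAt ℝ (iteratedFDeriv ℝ k φ) (c + w) :=
      (hφ.differentiable_iteratedFDeriv (by exact_mod_cast ENat.coe_lt_top k)).differentiableAt
    have h2 : HasFDerivAt (fun w => iteratedFDeriv ℝ k φ (c + w))
        ((fderiv ℝ (iteratedFDeriv ℝ k φ) (c + w)).comp (ContinuousLinearMap.id ℝ (En n))) w :=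
      HasFDerivAt.comp w hd.hasFDerivAt ((hasFDerivAt_id w).const_add c)
    rw [h2.fderiv, ContinuousLinearMap.comp_id]

lemma iter_line {n : ℕ} {φ : En n → ℝ} (hφ : ContDiff ℝ (⊤ : ℕ∞) φ) (c v : En n) (k : ℕ) (t : ℝ) :
    iteratedDeriv k (fun s : ℝ => φ (c + s • v)) t
      = iteratedFDeriv ℝ k φ (c + t • v) (fun _ => v) := by
  have hψ : ContDiff ℝ (⊤ : ℕ∞) (fun z : En n => φ (c + z)) :=
    hφ.comp (contDiff_const.add contDiff_id)
  set L : ℝ →L[ℝ] En n := (ContinuousLinearMap.id ℝ ℝ).smulRight v with hLdef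
  have hLa : ∀ s : ℝ, L s = s • v := fun s => rfl
  have hfun : (fun s : ℝ => φ (c + s • v)) = (fun z : En n => φ (c + z)) ∘ L := by
    funext s; simp [hLa]
  rw [iteratedDeriv_eq_iteratedFDeriv, hfun, L.iteratedFDeriv_comp_right hψ t (by exact_mod_cast le_top),
    ContinuousMultilinearMap.compContinuousLinearMap_apply, iter_translate hφ c k]
  simp [hLa]

lemma iterWithin {g : ℝ → ℝ} (hg : ContDiff ℝ (⊤ : ℕ∞) g) {k : ℕ} {t : ℝ}
    (ht : t ∈ Set.Icc (0:ℝ) 1) :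
    iteratedDerivWithin k g (Set.Icc 0 1) t = iteratedDeriv k g t := by
  have hg' : ContDiff ℝ ((⊤:ℕ∞) : WithTop ℕ∞) g := hg.of_le (by simp)
  have H : HasFTaylorSeriesUpTo (⊤:ℕ∞) g (ftaylorSeries ℝ g) := contDiff_iff_ftaylorSeries.mp hg'
  have H' : HasFTaylorSeriesUpToOn (⊤:ℕ∞) g (ftaylorSeries ℝ g) (Set.Icc 0 1) :=
    (hasFTaylorSeriesUpToOn_univ_iff.mpr H).mono (Set.subset_univ _)
  have h1 := H'.eq_iteratedFDerivWithin_of_uniqueDiffOn (m := k) (by exact_mod_cast le_top) (uniqueDiffOn_Icc one_pos) ht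
  rw [iteratedDerivWithin_eq_iteratedFDerivWithin, iteratedDeriv_eq_iteratedFDeriv, ← h1]
  rfl

set_option maxHeartbeats 1000000

/-- Lemma `epsilon control`. -/
theorem stmt0 (n N : ℕ) (hN : 0 < N) (φ : En n → ℝ)
    (hφsmooth : ContDiff ℝ (⊤ : ℕ∞) φ)
    (hφsupp : Function.support φ ⊆ Metric.closedBall 0 1)
    (ε : ℝ) (hε0 : 0 ≤ ε) (hε1 : ε ≤ 1) :
    ∃ C > 0, ∀ (a : En n) (f : En n → ℂ), Integrable f →
      (∀ α : Fin n → ℕ, (∑ i, α i) ≤ N →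
        ∫ x : En n, (∏ i, (x i : ℂ) ^ α i) * f x = 0) →
      Integrable (fun y : En n => ‖y - a‖ ^ ((N : ℝ) + ε) * ‖f y‖) →
      ∀ (l : ℤ) (x : En n),
        ‖∫ y : En n, (((2:ℝ) ^ (l * (n:ℤ)) * φ ((2:ℝ) ^ l • (x - y)) : ℝ) : ℂ) * f y‖ ≤
          C * (2:ℝ) ^ ((l : ℝ) * ((N:ℝ) + n + ε)) *
            ∫ y : En n, ‖y - a‖ ^ ((N : ℝ) + ε) * ‖f y‖ := by
    classical
  -- uniform bounds on iterated derivatives of φ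
  have hφcs : HasCompactSupport φ := by
    refine IsCompact.of_isClosed_subset (isCompact_closedBall (0 : En n) 1)
      (isClosed_tsupport φ) (closure_minimal hφsupp Metric.isClosed_closedBall)
  have hBex : ∀ k : ℕ, ∃ b : ℝ, 0 ≤ b ∧ ∀ z : En n, ‖iteratedFDeriv ℝ k φ z‖ ≤ b := by
    intro k
    obtain ⟨b, hb⟩ := (hφcs.iteratedFDeriv k).exists_bound_of_continuous
      (hφsmooth.continuous_iteratedFDeriv (by exact_mod_cast le_top))
    exact ⟨max b 0, le_max_right _ _, fun z => (hb z).trans (le_max_left _ _)⟩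
  choose B hB0 hBb using hBex
  have hsum0 : (0:ℝ) ≤ ∑ k ∈ Finset.range (N + 2), B k :=
    Finset.sum_nonneg fun k _ => hB0 k
  set D : ℝ := 2 * (∑ k ∈ Finset.range (N + 2), B k) + 1 with hD
  have hD1 : (1:ℝ) ≤ D := by simp only [hD]; linarith
  have hNε0 : (0:ℝ) ≤ (N:ℝ) + ε := by positivity
  refine ⟨D, by linarith, ?_⟩
  intro a f hf hmom hf2 l x
  set p : ℝ := (2:ℝ) ^ l with hp
  have hp0 : (0:ℝ) < p := zpow_pos two_pos l
  set c : En n := p • (x - a) with hc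
  set v : En n → En n := fun y => p • (a - y) with hv
  have hcv : ∀ y : En n, c + (1:ℝ) • v y = p • (x - y) := by
    intro y
    rw [one_smul, hc, hv, ← smul_add]
    congr 1
    abel
  have hgc : ∀ y : En n, ContDiff ℝ (⊤ : ℕ∞) (fun t : ℝ => φ (c + t • v y)) := fun y =>
    hφsmooth.comp (contDiff_const.add (contDiff_id.smul contDiff_const))
  set T : En n → ℝ := fun y =>
    ∑ k ∈ Finset.range (N+1), ((Nat.factorial k : ℝ))⁻¹ * iteratedFDeriv ℝ k φ c (fun _ => v y) with hT
  have hvnorm : ∀ y : En n, ‖v y‖ = p * ‖y - a‖ := by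
    intro y
    rw [hv]
    simp only []
    rw [norm_smul, Real.norm_eq_abs, abs_of_pos hp0, norm_sub_rev]
  -- key pointwise estimate
  have hkey : ∀ y : En n, |φ (c + (1:ℝ) • v y) - T y| ≤ D * ‖v y‖ ^ ((N:ℝ) + ε) := by
    intro y
    set w : En n := v y with hw
    have hw0 : (0:ℝ) ≤ ‖w‖ := norm_nonneg _
    rcases le_or_gt 1 ‖w‖ with hwbig | hwsmall
    · -- big case : trivial bounds
      have hRp : (1:ℝ) ≤ ‖w‖ ^ ((N:ℝ)+ε) := by
        have := Real.rpow_le_rpow_of_exponent_le hwbig hNε0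
        rwa [Real.rpow_zero] at this
      have hg1 : |φ (c + (1:ℝ) • w)| ≤ B 0 := by
        have := hBb 0 (c + (1:ℝ) • w)
        rwa [norm_iteratedFDeriv_zero, Real.norm_eq_abs] at this
      have hterm : ∀ k ∈ Finset.range (N+1),
          |((Nat.factorial k : ℝ))⁻¹ * iteratedFDeriv ℝ k φ c (fun _ => w)| ≤ B k * ‖w‖ ^ ((N:ℝ)+ε) := by
        intro k hk
        have hkN : (k:ℝ) ≤ (N:ℝ) + ε := by
          have : k ≤ N := Nat.lt_succ_iff.mp (Finset.mem_range.mp hk)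
          have := (Nat.cast_le (α := ℝ)).mpr this
          linarith
        have h1 : ‖iteratedFDeriv ℝ k φ c (fun _ => w)‖ ≤ B k * ‖w‖ ^ k := by
          refine le_trans (ContinuousMultilinearMap.le_opNorm _ _) ?_
          have h2 : (∏ _i : Fin k, ‖w‖) = ‖w‖ ^ k := by
            simp [Finset.prod_const]
          rw [h2]
          gcongr
          exact hBb k c
        have h3 : ‖w‖ ^ k ≤ ‖w‖ ^ ((N:ℝ)+ε) := by
          rw [← Real.rpow_natCast ‖w‖ k]
          exact Real.rpow_le_rpow_of_exponent_le hwbig hkN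
        have habs : |((Nat.factorial k : ℝ))⁻¹ * iteratedFDeriv ℝ k φ c (fun _ => w)|
            ≤ |iteratedFDeriv ℝ k φ c (fun _ => w)| := by
          rw [abs_mul]
          have h7 : |((Nat.factorial k : ℝ))⁻¹| ≤ 1 := by
            rw [abs_of_nonneg (a := ((Nat.factorial k : ℝ))⁻¹) (by positivity),
              inv_le_one_iff₀]
            right
            exact_mod_cast Nat.one_le_iff_ne_zero.mpr (Nat.factorial_ne_zero k)
          nlinarith [abs_nonneg (iteratedFDeriv ℝ k φ c (fun _ => w))]
        refine habs.trans ?_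
        rw [← Real.norm_eq_abs]
        calc ‖iteratedFDeriv ℝ k φ c (fun _ => w)‖ ≤ B k * ‖w‖ ^ k := h1
          _ ≤ B k * ‖w‖ ^ ((N:ℝ)+ε) := mul_le_mul_of_nonneg_left h3 (hB0 k)
      have hTle : |T y| ≤ (∑ k ∈ Finset.range (N+1), B k) * ‖w‖ ^ ((N:ℝ)+ε) := by
        simp only [hT]
        rw [Finset.sum_mul]
        exact (Finset.abs_sum_le_sum_abs _ _).trans (Finset.sum_le_sum hterm)
      have hsub1 : B 0 ≤ ∑ k ∈ Finset.range (N + 2), B k :=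
        Finset.single_le_sum (fun k _ => hB0 k) (Finset.mem_range.mpr (by omega))
      have hsub2 : (∑ k ∈ Finset.range (N+1), B k) ≤ ∑ k ∈ Finset.range (N + 2), B k :=
        Finset.sum_le_sum_of_subset_of_nonneg
          (Finset.range_subset_range.mpr (by omega)) (fun k _ _ => hB0 k)
      calc |φ (c + (1:ℝ) • w) - T y| ≤ |φ (c + (1:ℝ) • w)| + |T y| := abs_sub _ _
        _ ≤ B 0 * ‖w‖ ^ ((N:ℝ)+ε) + (∑ k ∈ Finset.range (N+1), B k) * ‖w‖ ^ ((N:ℝ)+ε) := by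
            gcongr
            calc |φ (c + (1:ℝ) • w)| ≤ B 0 := hg1
              _ = B 0 * 1 := (mul_one _).symm
              _ ≤ B 0 * ‖w‖ ^ ((N:ℝ)+ε) := by gcongr; exact hB0 0
        _ ≤ D * ‖w‖ ^ ((N:ℝ)+ε) := by
            have hww : (0:ℝ) ≤ ‖w‖ ^ ((N:ℝ)+ε) := Real.rpow_nonneg hw0 _
            have : B 0 + (∑ k ∈ Finset.range (N+1), B k) ≤ D := by
              rw [hD]; linarith
            nlinarith
    · -- small case : Taylor remainder
      rcases eq_or_ne w 0 with hw0' | hw0'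
      · have hvy0 : v y = 0 := by rw [← hw]; exact hw0'
        have hT0 : T y = φ c := by
          simp only [hT]
          rw [Finset.sum_eq_single 0]
          · rw [hvy0]
            simp
          · intro k _ hk0
            rw [hvy0, ContinuousMultilinearMap.map_coord_zero _
              (⟨0, Nat.pos_of_ne_zero hk0⟩ : Fin k) rfl, mul_zero]
          · intro h; exact absurd (Finset.mem_range.mpr (by omega)) h
        rw [hw0', hT0]
        simp only [smul_zero, add_zero, sub_self, abs_zero, norm_zero]
        positivity
      · have hwpos : (0:ℝ) < ‖w‖ := norm_pos_iff.mpr hw0'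
        have hgN : ContDiffOn ℝ (N+1) (fun t : ℝ => φ (c + t • w)) (Set.Icc 0 1) :=
          ((hgc y).of_le (by exact_mod_cast le_top)).contDiffOn
        have hCbound : ∀ t ∈ Set.Icc (0:ℝ) 1,
            ‖iteratedDerivWithin (N+1) (fun t : ℝ => φ (c + t • w)) (Set.Icc 0 1) t‖ ≤
              B (N+1) * ‖w‖ ^ (N+1) := by
          intro t ht
          rw [iterWithin (hgc y) ht, iter_line hφsmooth c w (N+1) t]
          refine le_trans (ContinuousMultilinearMap.le_opNorm _ _) ?_
          have h2 : (∏ _i : Fin (N+1), ‖w‖) = ‖w‖ ^ (N+1) := by simp [Finset.prod_const]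
          rw [h2]
          gcongr
          exact hBb (N+1) _
        have htay := taylor_mean_remainder_bound (f := fun t : ℝ => φ (c + t • w))
          (a := 0) (b := 1) (x := 1) (n := N) zero_le_one hgN
          (Set.right_mem_Icc.mpr zero_le_one) hCbound
        have hTval : taylorWithinEval (fun t : ℝ => φ (c + t • w)) N (Set.Icc 0 1) 0 1 = T y := by
          rw [taylor_within_apply, hT]
          refine Finset.sum_congr rfl fun k hk => ?_
          rw [iterWithin (hgc y) (Set.left_mem_Icc.mpr zero_le_one), iter_line hφsmooth c w k 0]
          simp [smul_eq_mul]
          exact Or.inl rfl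
        rw [hTval, Real.norm_eq_abs] at htay
        refine htay.trans ?_
        have h4 : ‖w‖ ^ (N+1) ≤ ‖w‖ ^ ((N:ℝ)+ε) := by
          rw [← Real.rpow_natCast ‖w‖ (N+1)]
          refine Real.rpow_le_rpow_of_exponent_ge hwpos hwsmall.le ?_
          push_cast; linarith
        have h5 : B (N+1) ≤ D := by
          have : B (N+1) ≤ ∑ k ∈ Finset.range (N + 2), B k :=
            Finset.single_le_sum (fun k _ => hB0 k) (Finset.mem_range.mpr (by omega))
          rw [hD]; linarith
        calc B (N+1) * ‖w‖ ^ (N+1) * (1 - 0) ^ (N+1) / (Nat.factorial N : ℝ) 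
            ≤ B (N+1) * ‖w‖ ^ (N+1) := by
              rw [sub_zero, one_pow, mul_one]
              apply div_le_self (mul_nonneg (hB0 _) (by positivity))
              exact_mod_cast Nat.one_le_iff_ne_zero.mpr (Nat.factorial_ne_zero N)
          _ ≤ B (N+1) * ‖w‖ ^ ((N:ℝ)+ε) := mul_le_mul_of_nonneg_left h4 (hB0 _)
          _ ≤ D * ‖w‖ ^ ((N:ℝ)+ε) :=
              mul_le_mul_of_nonneg_right h5 (Real.rpow_nonneg hw0 _)
    -- continuity of v
  have hvcont : Continuous v := by
    rw [hv]; exact (continuous_const.sub continuous_id).const_smul p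
  -- integrability of the main term against f
  have hG1f : Integrable (fun y : En n => ((φ (c + (1:ℝ) • v y) : ℝ) : ℂ) * f y) := by
    refine integ_mul (N := N) hε0 hf hf2 ?_ (C := B 0) ?_
    · exact Complex.continuous_ofReal.comp (hφsmooth.continuous.comp
        (continuous_const.add (hvcont.const_smul (1:ℝ))))
    · intro y
      rw [Complex.norm_real, Real.norm_eq_abs]
      have h1 : |φ (c + (1:ℝ) • v y)| ≤ B 0 := by
        have := hBb 0 (c + (1:ℝ) • v y)
        rwa [norm_iteratedFDeriv_zero, Real.norm_eq_abs] at this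
      have h2 : (1:ℝ) ≤ (1 + ‖y - a‖) ^ N :=
        one_le_pow₀ (by simp [norm_nonneg])
      nlinarith [hB0 0]
  -- bound and integrability of T against f
  have hTbound : ∀ y : En n, |T y| ≤
      ((∑ k ∈ Finset.range (N+1), B k) * (max 1 p) ^ N) * (1 + ‖y - a‖) ^ N := by
    intro y
    simp only [hT]
    refine (Finset.abs_sum_le_sum_abs _ _).trans ?_
    have hterm : ∀ k ∈ Finset.range (N+1),
        |((Nat.factorial k : ℝ))⁻¹ * iteratedFDeriv ℝ k φ c (fun _ => v y)| ≤
          B k * ((max 1 p) ^ N * (1 + ‖y - a‖) ^ N) := by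
      intro k hk
      have hkN : k ≤ N := Nat.lt_succ_iff.mp (Finset.mem_range.mp hk)
      have habs : |((Nat.factorial k : ℝ))⁻¹ * iteratedFDeriv ℝ k φ c (fun _ => v y)|
          ≤ |iteratedFDeriv ℝ k φ c (fun _ => v y)| := by
        rw [abs_mul]
        have h7 : |((Nat.factorial k : ℝ))⁻¹| ≤ 1 := by
          rw [abs_of_nonneg (a := ((Nat.factorial k : ℝ))⁻¹) (by positivity), inv_le_one_iff₀]
          right
          exact_mod_cast Nat.one_le_iff_ne_zero.mpr (Nat.factorial_ne_zero k)
        nlinarith [abs_nonneg (iteratedFDeriv ℝ k φ c (fun _ => v y))]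
      refine habs.trans ?_
      rw [← Real.norm_eq_abs]
      have h1 : ‖iteratedFDeriv ℝ k φ c (fun _ => v y)‖ ≤ B k * ‖v y‖ ^ k := by
        refine le_trans (ContinuousMultilinearMap.le_opNorm _ _) ?_
        have h2 : (∏ _i : Fin k, ‖v y‖) = ‖v y‖ ^ k := by simp [Finset.prod_const]
        rw [h2]
        gcongr
        exact hBb k c
      refine h1.trans ?_
      have h3 : ‖v y‖ ^ k ≤ (max 1 p) ^ N * (1 + ‖y - a‖) ^ N := by
        have h4 : ‖v y‖ ≤ (max 1 p) * (1 + ‖y - a‖) := by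
          rw [hvnorm y]
          have := norm_nonneg (y - a)
          have hpm : p ≤ max 1 p := le_max_right _ _
          nlinarith [le_max_left (1:ℝ) p, hp0.le]
        have h5 : ‖v y‖ ^ k ≤ ((max 1 p) * (1 + ‖y - a‖)) ^ k :=
          pow_le_pow_left₀ (norm_nonneg _) h4 k
        refine h5.trans ?_
        have h6 : ((max 1 p) * (1 + ‖y - a‖)) ^ k ≤ ((max 1 p) * (1 + ‖y - a‖)) ^ N := by
          apply pow_le_pow_right₀ _ hkN
          have := norm_nonneg (y - a)
          nlinarith [le_max_left (1:ℝ) p]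
        exact h6.trans_eq (mul_pow _ _ _)
      exact mul_le_mul_of_nonneg_left h3 (hB0 k)
    refine (Finset.sum_le_sum hterm).trans ?_
    rw [← Finset.sum_mul, mul_assoc]
  have hTcont : Continuous (fun y : En n => T y) := by
    simp only [hT]
    refine continuous_finset_sum _ fun k _ => Continuous.mul continuous_const ?_
    exact (iteratedFDeriv ℝ k φ c).cont.comp (continuous_pi fun _ => hvcont)
  have hTf : Integrable (fun y : En n => ((T y : ℝ) : ℂ) * f y) := by
    refine integ_mul (N := N) hε0 hf hf2 (Complex.continuous_ofReal.comp hTcont)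
      (C := (∑ k ∈ Finset.range (N+1), B k) * (max 1 p) ^ N) ?_
    intro y
    rw [Complex.norm_real, Real.norm_eq_abs]
    exact hTbound y
  -- basis expansion
  have hbasis : ∀ z : En n, z = ∑ i : Fin n, z i • EuclideanSpace.single i (1:ℝ) := by
    intro z
    have h := (EuclideanSpace.basisFun (Fin n) ℝ).sum_repr z
    simpa [EuclideanSpace.basisFun_apply, EuclideanSpace.basisFun_repr] using h.symm
  have hexp : ∀ (k : ℕ) (z : En n) (M : ContinuousMultilinearMap ℝ (fun _ : Fin k => En n) ℝ),
      M (fun _ => z) = ∑ d : Fin k → Fin n,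
        (∏ j, z (d j)) * M (fun j => EuclideanSpace.single (d j) (1:ℝ)) := by
    intro k z M
    have h1 : M (fun _ => z) =
        M (fun _ => ∑ i : Fin n, z i • EuclideanSpace.single i (1:ℝ)) := by
      rw [← hbasis z]
    rw [h1, M.map_sum (g := fun (_ : Fin k) (i : Fin n) => z i • EuclideanSpace.single i (1:ℝ))]
    refine Finset.sum_congr rfl fun d _ => ?_
    rw [M.map_smul_univ (fun j => z (d j)) (fun j => EuclideanSpace.single (d j) (1:ℝ))]
    rw [smul_eq_mul]
  -- integrability of shifted monomials against f
  have hdiffint : ∀ (k : ℕ), k ≤ N → ∀ (d : Fin k → Fin n),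
      Integrable (fun y : En n => (∏ j, ((y (d j) : ℂ) - (a (d j) : ℂ))) * f y) := by
    intro k hk d
    refine integ_mul (N := N) hε0 hf hf2 ?_ (C := 1) ?_
    · exact continuous_finset_prod _ fun j _ => Continuous.sub
        (Complex.continuous_ofReal.comp ((continuous_apply (d j)).comp
          (PiLp.continuous_ofLp 2 fun _ : Fin n => ℝ))) continuous_const
    · intro y
      rw [one_mul, norm_prod]
      have h1 : ∀ j : Fin k, ‖((y (d j) : ℂ) - (a (d j) : ℂ))‖ ≤ 1 + ‖y - a‖ := by
        intro j
        have h2 : ((y (d j) : ℂ) - (a (d j) : ℂ)) = (((y (d j) - a (d j) : ℝ)) : ℂ) := by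
          push_cast; ring
        rw [h2, Complex.norm_real, Real.norm_eq_abs]
        have h3 : y (d j) - a (d j) = (y - a) (d j) := rfl
        rw [h3]
        have := coordEn (y - a) (d j)
        linarith [norm_nonneg (y - a)]
      calc (∏ j, ‖((y (d j) : ℂ) - (a (d j) : ℂ))‖) ≤ ∏ _j : Fin k, (1 + ‖y - a‖) :=
            Finset.prod_le_prod (fun j _ => norm_nonneg _) (fun j _ => h1 j)
        _ = (1 + ‖y - a‖) ^ k := by simp [Finset.prod_const]
        _ ≤ (1 + ‖y - a‖) ^ N := by
            apply pow_le_pow_right₀ _ hk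
            linarith [norm_nonneg (y - a)]
  -- vanishing of the Taylor polynomial term
  have hTzero : ∫ y : En n, ((T y : ℝ) : ℂ) * f y = 0 := by
    have hvyi : ∀ (y : En n) (i : Fin n), (v y) i = -p * (y i - a i) := by
      intro y i
      have : (v y) i = p * (a i - y i) := rfl
      rw [this]; ring
    have hpt : ∀ y : En n, ((T y : ℝ) : ℂ) * f y =
        ∑ k ∈ Finset.range (N+1), ∑ d : Fin k → Fin n,
          ((((Nat.factorial k : ℝ))⁻¹ *
            iteratedFDeriv ℝ k φ c (fun j => EuclideanSpace.single (d j) (1:ℝ)) *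
            (-p)^k : ℝ) : ℂ) *
          ((∏ j, ((y (d j) : ℂ) - (a (d j) : ℂ))) * f y) := by
      intro y
      have h1 : T y = ∑ k ∈ Finset.range (N+1), ∑ d : Fin k → Fin n,
          (((Nat.factorial k : ℝ))⁻¹ *
            iteratedFDeriv ℝ k φ c (fun j => EuclideanSpace.single (d j) (1:ℝ)) *
            (-p)^k) * (∏ j, (y (d j) - a (d j))) := by
        simp only [hT]
        refine Finset.sum_congr rfl fun k hk => ?_
        rw [hexp k (v y) (iteratedFDeriv ℝ k φ c), Finset.mul_sum]
        refine Finset.sum_congr rfl fun d _ => ?_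
        have h2 : (∏ j, (v y) (d j)) = (-p)^k * ∏ j, (y (d j) - a (d j)) := by
          calc (∏ j, (v y) (d j)) = ∏ j, (-p * (y (d j) - a (d j))) :=
                Finset.prod_congr rfl fun j _ => hvyi y (d j)
            _ = (-p)^k * ∏ j, (y (d j) - a (d j)) := by
                rw [Finset.prod_mul_distrib]
                congr 1
                simp [Finset.prod_const]
        rw [h2]; ring
      rw [h1]
      push_cast
      rw [Finset.sum_mul]
      refine Finset.sum_congr rfl fun k _ => ?_
      rw [Finset.sum_mul]
      refine Finset.sum_congr rfl fun d _ => ?_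
      ring
    simp_rw [hpt]
    rw [integral_finset_sum _ (fun k hk => integrable_finset_sum _ (fun d _ =>
      ((hdiffint k (Nat.lt_succ_iff.mp (Finset.mem_range.mp hk)) d).const_mul _)))]
    refine Finset.sum_eq_zero fun k hk => ?_
    rw [integral_finset_sum _ (fun d _ =>
      ((hdiffint k (Nat.lt_succ_iff.mp (Finset.mem_range.mp hk)) d).const_mul _))]
    refine Finset.sum_eq_zero fun d _ => ?_
    rw [integral_const_mul,
      moment_shift hε0 hf hf2 hmom (Nat.lt_succ_iff.mp (Finset.mem_range.mp hk)) d, mul_zero]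
  -- subtract the Taylor polynomial
  have hsub : ∫ y : En n, ((φ (c + (1:ℝ) • v y) : ℝ) : ℂ) * f y
      = ∫ y : En n, ((φ (c + (1:ℝ) • v y) - T y : ℝ) : ℂ) * f y := by
    have h1 : (fun y : En n => ((φ (c + (1:ℝ) • v y) - T y : ℝ) : ℂ) * f y)
        = fun y => ((φ (c + (1:ℝ) • v y) : ℝ) : ℂ) * f y - ((T y : ℝ) : ℂ) * f y := by
      funext y; push_cast; ring
    rw [h1, integral_sub hG1f hTf, hTzero, sub_zero]
  set I : ℝ := ∫ y : En n, ‖y - a‖ ^ ((N : ℝ) + ε) * ‖f y‖ with hI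
  have hbound2 : ‖∫ y : En n, ((φ (c + (1:ℝ) • v y) : ℝ) : ℂ) * f y‖ ≤
      D * p ^ ((N:ℝ)+ε) * I := by
    rw [hsub]
    refine (norm_integral_le_integral_norm _).trans ?_
    have hptw : ∀ y : En n, ‖((φ (c + (1:ℝ) • v y) - T y : ℝ) : ℂ) * f y‖ ≤
        D * p ^ ((N:ℝ)+ε) * (‖y - a‖ ^ ((N:ℝ)+ε) * ‖f y‖) := by
      intro y
      rw [norm_mul, Complex.norm_real, Real.norm_eq_abs]
      calc |φ (c + (1:ℝ) • v y) - T y| * ‖f y‖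
          ≤ (D * ‖v y‖ ^ ((N:ℝ)+ε)) * ‖f y‖ :=
            mul_le_mul_of_nonneg_right (hkey y) (norm_nonneg _)
        _ = D * p ^ ((N:ℝ)+ε) * (‖y - a‖ ^ ((N:ℝ)+ε) * ‖f y‖) := by
            rw [hvnorm y, Real.mul_rpow hp0.le (norm_nonneg _)]
            ring
    calc (∫ y : En n, ‖((φ (c + (1:ℝ) • v y) - T y : ℝ) : ℂ) * f y‖)
        ≤ ∫ y : En n, D * p ^ ((N:ℝ)+ε) * (‖y - a‖ ^ ((N:ℝ)+ε) * ‖f y‖) :=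
          integral_mono_of_nonneg (Filter.Eventually.of_forall fun y => norm_nonneg _)
            (hf2.const_mul _) (Filter.Eventually.of_forall hptw)
      _ = D * p ^ ((N:ℝ)+ε) * I := by rw [integral_const_mul, hI]
  -- rewrite the statement's integrand
  have hLHSfun : (fun y : En n => (((2:ℝ) ^ (l * (n:ℤ)) * φ (p • (x - y)) : ℝ) : ℂ) * f y)
      = fun y : En n => (((2:ℝ) ^ (l * (n:ℤ)) : ℝ) : ℂ) * (((φ (c + (1:ℝ) • v y) : ℝ) : ℂ) * f y) := by
    funext y
    rw [hcv y]
    push_cast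
    ring
  rw [hLHSfun, integral_const_mul, norm_mul]
  have hq : ‖(((2:ℝ) ^ (l * (n:ℤ)) : ℝ) : ℂ)‖ = (2:ℝ) ^ (l * (n:ℤ)) := by
    rw [Complex.norm_real, Real.norm_eq_abs, abs_of_pos (zpow_pos two_pos _)]
  rw [hq]
  have hfinal : (2:ℝ) ^ (l * (n:ℤ)) * (D * p ^ ((N:ℝ)+ε)) =
      D * (2:ℝ) ^ ((l : ℝ) * ((N:ℝ) + n + ε)) := by
    rw [hp]
    rw [← Real.rpow_intCast 2 (l * (n:ℤ)), ← Real.rpow_intCast 2 l]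
    rw [← Real.rpow_mul (by norm_num : (0:ℝ) ≤ 2) ((l:ℤ):ℝ) ((N:ℝ)+ε)]
    calc (2:ℝ) ^ (((l * (n:ℤ) : ℤ)):ℝ) * (D * (2:ℝ) ^ (((l:ℤ):ℝ) * ((N:ℝ)+ε)))
        = D * ((2:ℝ) ^ (((l * (n:ℤ) : ℤ)):ℝ) * (2:ℝ) ^ (((l:ℤ):ℝ) * ((N:ℝ)+ε))) := by ring
      _ = D * (2:ℝ) ^ ((((l * (n:ℤ) : ℤ)):ℝ) + ((l:ℤ):ℝ) * ((N:ℝ)+ε)) := by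
          rw [← Real.rpow_add two_pos]
      _ = D * (2:ℝ) ^ ((l : ℝ) * ((N:ℝ) + n + ε)) := by
          congr 1
          push_cast
          ring
  calc (2:ℝ) ^ (l * (n:ℤ)) * ‖∫ y : En n, ((φ (c + (1:ℝ) • v y) : ℝ) : ℂ) * f y‖
      ≤ (2:ℝ) ^ (l * (n:ℤ)) * (D * p ^ ((N:ℝ)+ε) * I) :=
        mul_le_mul_of_nonneg_left hbound2 (zpow_pos two_pos _).le
    _ = ((2:ℝ) ^ (l * (n:ℤ)) * (D * p ^ ((N:ℝ)+ε))) * I := by ring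
    _ = D * (2:ℝ) ^ ((l : ℝ) * ((N:ℝ) + n + ε)) * I := by rw [hfinal]
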